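/- Consider a one-layer ReLU network with weight matrix W, a compact input uncertainty set X, and a partition {X^(1),…,X^(p)} of X with per-part preactivation bounds l^(j), u^(j) valid on X^(j), satisfying l^(j) ≤ 0 ≤ u^(j) and l^(j) < u^(j) componentwise. Suppose (i) for each j there exists x̄ ∈ X^(j) with W x̄ = l^(j) (the lower preactivation bound is attained), and (ii) L ∈ ℝ is a uniform Lipschitz constant for the relaxation on every part, i.e., for every j and all x₁, x₂ ∈ X^(j), |sup{cᵀz : (x₁,z) ∈ N(W,l^(j),u^(j))} − sup{cᵀz : (x₂,z) ∈ N(W,l^(j),u^(j))}| ≤ L‖x₁ − x₂‖₂. Let d* = max_j d(X^(j)) be the largest diameter among the input parts. Then |f*(X) − max_{j∈{1,…,p}} f̂*(X^(j); l^(j), u^(j))| ≤ L d*. -/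

import Mathlib

/-!
The ReLU point `(x, ReLU(Wx))` is feasible for every relaxation whose bounds are valid at `x`,
so `f*(X) ≤ maxⱼ f̂*(X⁽ʲ⁾)`. Conversely, at a point `x̄` with `Wx̄ = l` the chord constraint
forces `z = 0`, so the inner relaxation value there is `0`; by the Lipschitz bound the inner value
anywhere on `X⁽ʲ⁾` is at most `L d*`, while `f*(X) ≥ cᵀReLU(Wx̄) = 0`.
-/
open Finset Matrix

noncomputable section

/-- Membership of `(x, z)` in the relaxed ReLU network constraint set `N(W, l, u)`
of a one-layer ReLU network. -/
def InRelax {nx nz : ℕ} (W : Matrix (Fin nz) (Fin nx) ℝ) (l u : Fin nz → ℝ)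
    (x : Fin nx → ℝ) (z : Fin nz → ℝ) : Prop :=
  ∀ i, 0 ≤ z i ∧ W.mulVec x i ≤ z i ∧
    z i ≤ u i * (W.mulVec x i - l i) / (u i - l i)

/-- Values `cᵀ ReLU(Wx)` of the true network over `X`. -/
def trueVals {nx nz : ℕ} (W : Matrix (Fin nz) (Fin nx) ℝ) (c : Fin nz → ℝ)
    (X : Set (EuclideanSpace ℝ (Fin nx))) : Set ℝ :=
  {v | ∃ x ∈ X, v = ∑ i, c i * max (W.mulVec x i) 0}

/-- Values `cᵀ z` over the LP relaxation feasible set. -/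
def hatVals {nx nz : ℕ} (W : Matrix (Fin nz) (Fin nx) ℝ) (c : Fin nz → ℝ)
    (X : Set (EuclideanSpace ℝ (Fin nx))) (l u : Fin nz → ℝ) : Set ℝ :=
  {v | ∃ x z, x ∈ X ∧ InRelax W l u x z ∧ v = ∑ i, c i * z i}

/-- Values `cᵀ z` of the inner LP `sup{cᵀz : (x, z) ∈ N(W,l,u)}` for a fixed `x`. -/
def innerVals {nx nz : ℕ} (W : Matrix (Fin nz) (Fin nx) ℝ) (c : Fin nz → ℝ)
    (l u : Fin nz → ℝ) (x : EuclideanSpace ℝ (Fin nx)) : Set ℝ :=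
  {v | ∃ z, InRelax W l u x z ∧ v = ∑ i, c i * z i}

section Diameter

variable {α : Type*} [PseudoMetricSpace α]

theorem diam_eq_zero_of_abs_sub_le_mul_dist {s : Set α} {g : α → ℝ} {L : ℝ} (hL : L < 0)
    (hg : ∀ x ∈ s, ∀ y ∈ s, |g x - g y| ≤ L * dist x y) : Metric.diam s = 0 :=
  le_antisymm
    (Metric.diam_le_of_forall_dist_le le_rfl fun x hx y hy =>
      nonpos_of_mul_nonneg_right ((abs_nonneg _).trans (hg x hx y hy)) hL)
    Metric.diam_nonneg

/-- `L` may be negative: then every piece has diameter `0` and both sides vanish. -/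
theorem abs_sub_le_mul_iSup_diam {ι : Type*} [Finite ι] {s : ι → Set α} {g : ι → α → ℝ}
    {L : ℝ} (hs : ∀ i, Bornology.IsBounded (s i))
    (hg : ∀ i, ∀ x ∈ s i, ∀ y ∈ s i, |g i x - g i y| ≤ L * dist x y)
    {i : ι} {x y : α} (hx : x ∈ s i) (hy : y ∈ s i) :
    |g i x - g i y| ≤ L * ⨆ k, Metric.diam (s k) := by
  refine (hg i x hx y hy).trans ?_
  have hdist := Metric.dist_le_diam_of_mem (hs i) hx hy
  rcases le_or_gt 0 L with hL | hL
  · exact mul_le_mul_of_nonneg_left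
      (hdist.trans (le_ciSup (Set.finite_range fun k => Metric.diam (s k)).bddAbove i)) hL
  · have hdiam k := diam_eq_zero_of_abs_sub_le_mul_dist hL (hg k)
    have hxy : dist x y = 0 := le_antisymm (hdiam i ▸ hdist) dist_nonneg
    simp only [hdiam, Real.iSup_const_zero, hxy, le_refl]

end Diameter

theorem max_zero_le_chord {l u t : ℝ} (hl : l ≤ 0) (hu : 0 ≤ u) (hlu : l < u) (hlt : l ≤ t)
    (htu : t ≤ u) : max t 0 ≤ u * (t - l) / (u - l) := by
  rw [le_div_iff₀ (sub_pos.2 hlu)]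
  rcases le_total t 0 with ht | ht
  · rw [max_eq_right ht]; nlinarith
  · rw [max_eq_left ht]; nlinarith

section Relaxation

variable {nx nz : ℕ} {W : Matrix (Fin nz) (Fin nx) ℝ} {c l u : Fin nz → ℝ}

theorem inRelax_relu {x : Fin nx → ℝ} (hl : ∀ i, l i ≤ 0) (hu : ∀ i, 0 ≤ u i)
    (hlu : ∀ i, l i < u i) (hx : ∀ i, l i ≤ W.mulVec x i ∧ W.mulVec x i ≤ u i) :
    InRelax W l u x fun i => max (W.mulVec x i) 0 := fun i =>
  ⟨le_max_right _ _, le_max_left _ _,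
    max_zero_le_chord (hl i) (hu i) (hlu i) (hx i).1 (hx i).2⟩

theorem trueVals_subset_hatVals {S : Set (EuclideanSpace ℝ (Fin nx))} (hl : ∀ i, l i ≤ 0)
    (hu : ∀ i, 0 ≤ u i) (hlu : ∀ i, l i < u i)
    (hS : ∀ x ∈ S, ∀ i, l i ≤ W.mulVec x i ∧ W.mulVec x i ≤ u i) :
    trueVals W c S ⊆ hatVals W c S l u := by
  rintro v ⟨x, hx, rfl⟩
  exact ⟨x, _, hx, inRelax_relu hl hu hlu (hS x hx), rfl⟩

theorem zero_mem_trueVals {S : Set (EuclideanSpace ℝ (Fin nx))} {x : EuclideanSpace ℝ (Fin nx)}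
    (hx : x ∈ S) (hWx : ∀ i, W.mulVec x i ≤ 0) : (0 : ℝ) ∈ trueVals W c S :=
  ⟨x, hx, by simp only [max_eq_right (hWx _), mul_zero, Finset.sum_const_zero]⟩

/-- At a point attaining the lower bound the chord constraint reads `z ≤ 0`. -/
theorem innerVals_eq_zero_of_mulVec_eq {x : EuclideanSpace ℝ (Fin nx)} (hl : ∀ i, l i ≤ 0)
    (hx : W.mulVec x = l) : innerVals W c l u x = {0} := by
  ext v
  simp only [innerVals, InRelax, hx, sub_self, mul_zero, zero_div, Set.mem_ofPred_eq,
    Set.mem_singleton_iff]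
  constructor
  · rintro ⟨z, hz, rfl⟩
    have hz0 : ∀ i, z i = 0 := fun i => le_antisymm (hz i).2.2 (hz i).1
    simp only [hz0, mul_zero, Finset.sum_const_zero]
  · rintro rfl
    exact ⟨0, fun i => ⟨le_rfl, hl i, le_rfl⟩, by simp⟩

end Relaxation

theorem diameter_bound_general {nx nz p : ℕ}
    (W : Matrix (Fin nz) (Fin nx) ℝ) (c : Fin nz → ℝ)
    (X : Set (EuclideanSpace ℝ (Fin nx))) (hXcompact : IsCompact X)
    (Xp : Fin p → Set (EuclideanSpace ℝ (Fin nx)))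
    -- `{X⁽ʲ⁾}` is a partition of `X`
    (hcover : (⋃ j, Xp j) = X)
    -- per-part preactivation bounds: valid, with `l⁽ʲ⁾ ≤ 0 ≤ u⁽ʲ⁾` and `l⁽ʲ⁾ < u⁽ʲ⁾`
    (lp up : Fin p → Fin nz → ℝ)
    (hpsign : ∀ j i, lp j i ≤ 0 ∧ 0 ≤ up j i ∧ lp j i < up j i)
    (hpvalid : ∀ j, ∀ x ∈ Xp j, ∀ i, lp j i ≤ W.mulVec x i ∧ W.mulVec x i ≤ up j i)
    -- (i) the lower preactivation bound is attained on each part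
    (hattain : ∀ j, ∃ xbar ∈ Xp j, W.mulVec xbar = lp j)
    -- (ii) `L` is a uniform Lipschitz constant for the relaxation on every part
    (L : ℝ)
    (hlip : ∀ j, ∀ x₁ ∈ Xp j, ∀ x₂ ∈ Xp j,
      |sSup (innerVals W c (lp j) (up j) x₁) -
        sSup (innerVals W c (lp j) (up j) x₂)| ≤ L * ‖x₁ - x₂‖)
    -- the inner suprema are attained
    (hinner : ∀ j, ∀ x ∈ Xp j, ∃ v, IsGreatest (innerVals W c (lp j) (up j) x) v)
    -- attained optimal values `f*(X)` and `f̂*(X⁽ʲ⁾; l⁽ʲ⁾, u⁽ʲ⁾)`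
    (fstar : ℝ) (hfstar : IsGreatest (trueVals W c X) fstar)
    (Fhat : Fin p → ℝ)
    (hFhat : ∀ j, IsGreatest (hatVals W c (Xp j) (lp j) (up j)) (Fhat j))
    -- the largest diameter among the input parts
    (dstar : ℝ) (hdstar : dstar = ⨆ j, Metric.diam (Xp j)) :
    |fstar - ⨆ j, Fhat j| ≤ L * dstar := by
  have hsub : ∀ j, Xp j ⊆ X := fun j => hcover ▸ Set.subset_iUnion Xp j
  have hbdd : ∀ j, Bornology.IsBounded (Xp j) := fun j => hXcompact.isBounded.subset (hsub j)
  obtain ⟨xstar, hxstar, hfstar_eq⟩ := hfstar.1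
  obtain ⟨j₀, hj₀⟩ := Set.mem_iUnion.mp (hcover ▸ hxstar)
  have hlower : fstar ≤ ⨆ j, Fhat j := by
    have hmem := trueVals_subset_hatVals (fun i => (hpsign j₀ i).1) (fun i => (hpsign j₀ i).2.1)
      (fun i => (hpsign j₀ i).2.2) (hpvalid j₀) ⟨xstar, hj₀, hfstar_eq⟩
    exact ((hFhat j₀).2 hmem).trans (le_ciSup (Set.finite_range Fhat).bddAbove j₀)
  have hupper : ⨆ j, Fhat j ≤ fstar + L * dstar := by
    have : Nonempty (Fin p) := ⟨j₀⟩
    refine ciSup_le fun j => ?_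
    obtain ⟨x, z, hx, hz, hFhat_eq⟩ := (hFhat j).1
    obtain ⟨v, hv⟩ := hinner j x hx
    obtain ⟨xbar, hxbar, hWxbar⟩ := hattain j
    have hl : ∀ i, lp j i ≤ 0 := fun i => (hpsign j i).1
    have hfstar_nonneg : 0 ≤ fstar :=
      hfstar.2 (zero_mem_trueVals (hsub j hxbar) (by simpa only [hWxbar] using hl))
    have hvar := abs_sub_le_mul_iSup_diam hbdd
      (fun j x₁ h₁ x₂ h₂ => by simpa only [dist_eq_norm] using hlip j x₁ h₁ x₂ h₂) hx hxbar
    rw [hv.csSup_eq, innerVals_eq_zero_of_mulVec_eq hl hWxbar, csSup_singleton, sub_zero,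
      ← hdstar] at hvar
    calc Fhat j ≤ v := hFhat_eq ▸ hv.2 ⟨z, hz, rfl⟩
      _ ≤ L * dstar := (le_abs_self v).trans hvar
      _ ≤ fstar + L * dstar := le_add_of_nonneg_left hfstar_nonneg
  exact abs_le.2 ⟨by linarith, by linarith⟩

/-- diameter bound: for a one-layer ReLU network with a partition of
the compact input uncertainty set `X`, per-part valid bounds whose lower bound is
attained on each part, and a uniform Lipschitz constant `L` for the per-part
relaxation values, the gap between the unrelaxed problem and the partitioned LP
relaxation is at most `L d*`, where `d*` is the largest diameter among the parts. -/
theorem diameter_bound {nx nz p : ℕ}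
    (W : Matrix (Fin nz) (Fin nx) ℝ) (c : Fin nz → ℝ)
    (X : Set (EuclideanSpace ℝ (Fin nx))) (hXcompact : IsCompact X)
    (Xp : Fin p → Set (EuclideanSpace ℝ (Fin nx)))
    -- `{X⁽ʲ⁾}` is a partition of `X`
    (hcover : (⋃ j, Xp j) = X)
    (hdisj : ∀ j k, j ≠ k → Xp j ∩ Xp k = ∅)
    -- per-part preactivation bounds: valid, with `l⁽ʲ⁾ ≤ 0 ≤ u⁽ʲ⁾` and `l⁽ʲ⁾ < u⁽ʲ⁾`
    (lp up : Fin p → Fin nz → ℝ)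
    (hpsign : ∀ j i, lp j i ≤ 0 ∧ 0 ≤ up j i ∧ lp j i < up j i)
    (hpvalid : ∀ j, ∀ x ∈ Xp j, ∀ i, lp j i ≤ W.mulVec x i ∧ W.mulVec x i ≤ up j i)
    -- (i) the lower preactivation bound is attained on each part
    (hattain : ∀ j, ∃ xbar ∈ Xp j, W.mulVec xbar = lp j)
    -- (ii) `L` is a uniform Lipschitz constant for the relaxation on every part
    (L : ℝ)
    (hlip : ∀ j, ∀ x₁ ∈ Xp j, ∀ x₂ ∈ Xp j,
      |sSup (innerVals W c (lp j) (up j) x₁) -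
        sSup (innerVals W c (lp j) (up j) x₂)| ≤ L * ‖x₁ - x₂‖)
    -- the inner suprema are attained
    (hinner : ∀ j, ∀ x ∈ Xp j, ∃ v, IsGreatest (innerVals W c (lp j) (up j) x) v)
    -- attained optimal values `f*(X)` and `f̂*(X⁽ʲ⁾; l⁽ʲ⁾, u⁽ʲ⁾)`
    (fstar : ℝ) (hfstar : IsGreatest (trueVals W c X) fstar)
    (Fhat : Fin p → ℝ)
    (hFhat : ∀ j, IsGreatest (hatVals W c (Xp j) (lp j) (up j)) (Fhat j))
    -- the largest diameter among the input parts
    (dstar : ℝ) (hdstar : dstar = ⨆ j, Metric.diam (Xp j)) :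
    |fstar - ⨆ j, Fhat j| ≤ L * dstar :=
  diameter_bound_general W c X hXcompact Xp hcover lp up hpsign hpvalid hattain L hlip hinner fstar
    hfstar Fhat hFhat dstar hdstar
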